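/- arXiv:2502.17954 — 2 statements merged into one kernel-verified Lean document; each statement's English description precedes it below -/
import Mathlib

section
/- Let m, n ≥ 3 be integers and d = gcd(m, n). Then z(F_m · F_n) = [m, n] · F_d. -/
/-- The classical Lucas sequence: `L 0 = 2`, `L 1 = 1`, `L (k+2) = L (k+1) + L k`. -/
def lucas : ℕ → ℕ
  | 0 => 2
  | 1 => 1
  | (k + 2) => lucas (k + 1) + lucas k

/-- The order of appearance of `m` in the Fibonacci sequence:
the smallest positive integer `k` such that `m ∣ fib k`. -/
noncomputable def z (m : ℕ) : ℕ :=
  sInf {k : ℕ | 0 < k ∧ m ∣ Nat.fib k}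

open Nat

/-- Addition step for Fibonacci, cast to ℤ. -/
lemma fib_step1 (a x : ℕ) (ha : 1 ≤ a) :
    (fib (x + a) : ℤ) = fib x * ((fib (a+1) : ℤ) - fib a) + fib (x+1) * fib a := by
  obtain ⟨c, rfl⟩ := Nat.exists_eq_add_of_le ha
  have h := Nat.fib_add x c
  have h2 : (fib c : ℤ) = (fib (1 + c + 1) : ℤ) - fib (1 + c) := by
    rw [show 1+c+1 = c+2 by omega, show 1+c = c+1 by omega, Nat.fib_add_two]
    push_cast; ring
  have hx : x + (1 + c) = x + c + 1 := by omega
  rw [hx]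
  push_cast [h]
  rw [h2]
  ring_nf

lemma fib_step2 (a x : ℕ) :
    (fib (x + a + 1) : ℤ) = fib (x+1) * fib (a+1) + fib x * fib a := by
  have h := Nat.fib_add x a
  push_cast [h]; ring

/-- Key expansion of `fib (a*t)` and `fib (a*t+1)` modulo `fib a ^ 3`. -/
lemma fib_expand (a : ℕ) (ha : 1 ≤ a) (t : ℕ) :
    ∃ u v : ℤ,
      (fib (a * t) : ℤ) = t * (fib (a+1) : ℤ)^(t-1) * fib a
          - (t.choose 2) * (fib (a+1) : ℤ)^(t-2) * (fib a : ℤ)^2 + u * (fib a : ℤ)^3 ∧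
      (fib (a * t + 1) : ℤ) = (fib (a+1) : ℤ)^t
          + (t.choose 2) * (fib (a+1) : ℤ)^(t-2) * (fib a : ℤ)^2 + v * (fib a : ℤ)^3 := by
  set F : ℤ := (fib a : ℤ) with hF
  set b : ℤ := (fib (a+1) : ℤ) with hb
  induction t with
  | zero => exact ⟨0, 0, by simp, by simp⟩
  | succ t ih =>
    obtain ⟨u, v, hx, hy⟩ := ih
    have e1 : (fib (a * (t+1)) : ℤ) = fib (a*t) * (b - F) + fib (a*t+1) * F := by
      have := fib_step1 a (a*t) ha
      rw [show a*t + a = a*(t+1) by ring] at this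
      exact this
    have e2 : (fib (a * (t+1) + 1) : ℤ) = fib (a*t+1) * b + fib (a*t) * F := by
      have h := fib_step2 a (a*t)
      rw [show a*t + a + 1 = a*(t+1) + 1 by ring] at h
      rw [h]
    match t with
    | 0 =>
      refine ⟨u * (b - F) + v * F, v * b + u * F, ?_, ?_⟩
      · rw [e1, hx, hy]; simp; ring_nf
      · rw [e2, hx, hy]; simp; ring_nf
    | 1 =>
      refine ⟨u * (b - F) + v * F, v * b + u * F, ?_, ?_⟩
      · rw [e1, hx, hy]; simp [Nat.choose]; ring
      · rw [e2, hx, hy]; simp [Nat.choose]; ring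
    | (s+2) =>
      refine ⟨u * (b - F) + v * F + 2 * ((s+2).choose 2) * b^s, v * b + u * F - ((s+2).choose 2) * b^s, ?_, ?_⟩
      · rw [e1, hx, hy]
        have hc : ((s+3).choose 2 : ℤ) = (s+2).choose 2 + (s+2) := by
          have : (s+3).choose 2 = (s+2).choose 2 + (s+2) := by simp [Nat.choose]; omega
          exact_mod_cast this
        simp only [show s+2+1 = s+3 from rfl, show s+2-1 = s+1 from rfl,
          show s+2-2 = s from rfl, show s+3-1 = s+2 from rfl, show s+3-2 = s+1 from rfl]
        rw [hc]
        push_cast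
        ring
      · rw [e2, hx, hy]
        have hc : ((s+3).choose 2 : ℤ) = (s+2).choose 2 + (s+2) := by
          have : (s+3).choose 2 = (s+2).choose 2 + (s+2) := by simp [Nat.choose]; omega
          exact_mod_cast this
        simp only [show s+2+1 = s+3 from rfl, show s+2-1 = s+1 from rfl,
          show s+2-2 = s from rfl, show s+3-1 = s+2 from rfl, show s+3-2 = s+1 from rfl]
        rw [hc]
        push_cast
        ring

lemma not_dvd_fib_succ {p a : ℕ} (hp : p.Prime) (h : p ∣ fib a) : ¬ p ∣ fib (a+1) := by
  intro h2
  have := Nat.Coprime.eq_one_of_dvd ((fib_coprime_fib_succ a).coprime_dvd_left h) h2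
  exact hp.one_lt.ne' this

lemma fib_mul_eq (a : ℕ) (ha : 1 ≤ a) (t : ℕ) :
    ∃ w : ℕ, fib (a * t) = fib a * w ∧ ∃ u : ℤ,
      (w : ℤ) = t * (fib (a+1) : ℤ)^(t-1)
        - (t.choose 2) * (fib (a+1) : ℤ)^(t-2) * (fib a : ℤ) + u * (fib a : ℤ)^2 := by
  obtain ⟨u, v, hx, -⟩ := fib_expand a ha t
  obtain ⟨w, hw⟩ := Nat.fib_dvd a (a*t) ⟨t, rfl⟩
  refine ⟨w, hw, u, ?_⟩
  have hF : (0:ℤ) < (fib a : ℤ) := by exact_mod_cast (Nat.fib_pos.mpr ha)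
  refine mul_left_cancel₀ hF.ne' ?_
  have hx' : ((fib a : ℤ) * w) = (fib (a * t) : ℤ) := by exact_mod_cast hw.symm
  rw [hx', hx]; ring

lemma fib_pos' {a : ℕ} (ha : 1 ≤ a) : fib a ≠ 0 := (Nat.fib_pos.mpr ha).ne'

lemma lte_coprime {p a s : ℕ} (hp : p.Prime) (ha : 1 ≤ a) (hpa : p ∣ fib a)
    (hs : 1 ≤ s) (hps : ¬ p ∣ s) :
    (fib (a*s)).factorization p = (fib a).factorization p := by
  obtain ⟨w, hw, u, hwu⟩ := fib_mul_eq a ha s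
  have hw0 : w ≠ 0 := by
    rintro rfl
    rw [Nat.mul_zero] at hw
    exact (Nat.fib_pos.mpr (Nat.mul_pos ha hs)).ne' hw
  rw [hw, Nat.factorization_mul (fib_pos' ha) hw0]
  suffices h : ¬ p ∣ w by
    simp [Nat.factorization_eq_zero_of_not_dvd h]
  intro hdvd
  have h1 : (p:ℤ) ∣ (w:ℤ) := Int.natCast_dvd_natCast.mpr hdvd
  have h2 : (p:ℤ) ∣ (fib a : ℤ) := Int.natCast_dvd_natCast.mpr hpa
  have h3 : (p:ℤ) ∣ (s : ℤ) * (fib (a+1):ℤ)^(s-1) := by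
    have heq : (s : ℤ) * (fib (a+1):ℤ)^(s-1) =
        (w:ℤ) + (s.choose 2) * (fib (a+1) : ℤ)^(s-2) * (fib a : ℤ) - u * (fib a : ℤ)^2 := by
      rw [hwu]; ring
    rw [heq]
    exact dvd_sub (dvd_add h1 (Dvd.dvd.mul_left h2 _))
      (dvd_mul_of_dvd_right (dvd_pow h2 two_ne_zero) u)
  have h4 : p ∣ s * fib (a+1)^(s-1) := by exact_mod_cast h3
  rcases (Nat.Prime.dvd_mul hp).mp h4 with h | h
  · exact hps h
  · exact not_dvd_fib_succ hp hpa (hp.dvd_of_dvd_pow h)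

lemma lte_step {p a : ℕ} (hp : p.Prime) (ha : 1 ≤ a)
    (hcase : (Odd p ∧ p ∣ fib a) ∨ (p = 2 ∧ 4 ∣ fib a)) :
    (fib (a*p)).factorization p = (fib a).factorization p + 1 := by
  have hpa : p ∣ fib a := by
    rcases hcase with ⟨-, h⟩ | ⟨rfl, h⟩
    · exact h
    · exact dvd_trans (by norm_num) h
  obtain ⟨w, hw, u, hwu⟩ := fib_mul_eq a ha p
  have hb : ¬ p ∣ fib (a+1) := not_dvd_fib_succ hp hpa
  have h2 : (p:ℤ) ∣ (fib a : ℤ) := Int.natCast_dvd_natCast.mpr hpa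
  have hpw : p ∣ w := by
    have : (p:ℤ) ∣ (w:ℤ) := by
      rw [hwu]
      exact dvd_add (dvd_sub (Dvd.dvd.mul_right (dvd_refl _) _)
        (Dvd.dvd.mul_left h2 _)) (dvd_mul_of_dvd_right (dvd_pow h2 two_ne_zero) u)
    exact_mod_cast this
  have hnpw : ¬ (p^2) ∣ w := by
    intro hsq
    have hq1 : (p:ℤ)^2 ∣ (w:ℤ) := by exact_mod_cast hsq
    have key : (p:ℤ)^2 ∣ (p:ℤ) * (fib (a+1):ℤ)^(p-1) := by
      have hrest : (p:ℤ)^2 ∣ ((p.choose 2) * (fib (a+1) : ℤ)^(p-2) * (fib a : ℤ)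
          - u * (fib a : ℤ)^2) := by
        refine dvd_sub ?_ ?_
        · rcases hcase with ⟨hodd, -⟩ | ⟨rfl, h4⟩
          · have hpc : (p:ℤ) ∣ (p.choose 2 : ℤ) := by
              have hplt : 2 < p := by
                rcases hodd with ⟨j, hj⟩
                have := hp.two_le
                omega
              exact_mod_cast Int.natCast_dvd_natCast.mpr
                (hp.dvd_choose_self (by norm_num) hplt)
            rw [sq]
            exact mul_dvd_mul (hpc.mul_right _) h2
          · have h4' : (4:ℤ) ∣ (fib a : ℤ) := by exact_mod_cast Int.natCast_dvd_natCast.mpr h4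
            have hc4 : ((2:ℕ):ℤ)^2 = 4 := by norm_num
            rw [hc4]
            exact h4'.mul_left _
        · exact dvd_mul_of_dvd_right (pow_dvd_pow_of_dvd h2 2) u
      have heq : (p:ℤ) * (fib (a+1):ℤ)^(p-1) = (w:ℤ) +
          ((p.choose 2) * (fib (a+1) : ℤ)^(p-2) * (fib a : ℤ) - u * (fib a : ℤ)^2) := by
        rw [hwu]; ring
      rw [heq]
      exact dvd_add hq1 hrest
    have hdb : (p:ℤ) ∣ (fib (a+1):ℤ)^(p-1) := by
      have hpne : (p:ℤ) ≠ 0 := by exact_mod_cast hp.pos.ne'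
      rcases key with ⟨c, hc⟩
      refine ⟨c, ?_⟩
      refine mul_left_cancel₀ hpne ?_
      rw [hc]; ring
    have : p ∣ fib (a+1)^(p-1) := by exact_mod_cast hdb
    exact hb (hp.dvd_of_dvd_pow this)
  have hw0 : w ≠ 0 := by
    rintro rfl
    rw [Nat.mul_zero] at hw
    exact (Nat.fib_pos.mpr (Nat.mul_pos ha hp.pos)).ne' hw
  rw [hw, Nat.factorization_mul (fib_pos' ha) hw0]
  have hv1 : 1 ≤ w.factorization p :=
    (hp.pow_dvd_iff_le_factorization hw0).mp (by simpa using hpw)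
  have hv2 : ¬ 2 ≤ w.factorization p := fun h =>
    hnpw ((hp.pow_dvd_iff_le_factorization hw0).mpr h)
  have hv : w.factorization p = 1 := by omega
  simp [hv]

lemma lte_main {p a : ℕ} (hp : p.Prime) (ha : 1 ≤ a)
    (hcase : (Odd p ∧ p ∣ fib a) ∨ (p = 2 ∧ 4 ∣ fib a)) :
    ∀ t, 1 ≤ t → (fib (a*t)).factorization p = (fib a).factorization p + t.factorization p := by
  intro t
  induction t using Nat.strong_induction_on generalizing a with
  | _ t ih =>
    intro ht
    have hpa : p ∣ fib a := by
      rcases hcase with ⟨-, h⟩ | ⟨rfl, h⟩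
      · exact h
      · exact dvd_trans (by norm_num) h
    by_cases hps : p ∣ t
    · obtain ⟨s, rfl⟩ := hps
      have hs1 : 1 ≤ s := by
        rcases Nat.eq_zero_or_pos s with rfl | h
        · simp at ht
        · exact h
      have hslt : s < p * s := by
        have h2 := hp.two_le
        nlinarith
      have hstep := lte_step hp ha hcase
      have hcase' : (Odd p ∧ p ∣ fib (a*p)) ∨ (p = 2 ∧ 4 ∣ fib (a*p)) := by
        have hdvd : fib a ∣ fib (a*p) := Nat.fib_dvd a (a*p) ⟨p, rfl⟩
        rcases hcase with ⟨hodd, hpa'⟩ | ⟨rfl, h4⟩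
        · exact Or.inl ⟨hodd, hpa'.trans hdvd⟩
        · exact Or.inr ⟨rfl, h4.trans hdvd⟩
      have ha' : 1 ≤ a * p := Nat.mul_pos ha hp.pos
      have hih := ih s hslt ha' hcase' hs1
      rw [show a * (p * s) = (a * p) * s by ring, hih, hstep,
        Nat.factorization_mul hp.pos.ne' (by omega)]
      simp [hp.factorization]
      omega
    · rw [lte_coprime hp ha hpa ht hps, Nat.factorization_eq_zero_of_not_dvd hps]
      simp

lemma fib_mul_dvd {a t c : ℕ} (ha : 1 ≤ a) (hc : c ∣ fib a) (hct : c ∣ t) :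
    fib a * c ∣ fib (a * t) := by
  obtain ⟨w, hw, u, hwu⟩ := fib_mul_eq a ha t
  have hcz : (c:ℤ) ∣ (w:ℤ) := by
    rw [hwu]
    have h1 : (c:ℤ) ∣ (t:ℤ) := Int.natCast_dvd_natCast.mpr hct
    have h2 : (c:ℤ) ∣ (fib a:ℤ) := Int.natCast_dvd_natCast.mpr hc
    exact dvd_add (dvd_sub (h1.mul_right _) (Dvd.dvd.mul_left h2 _))
      (dvd_mul_of_dvd_right (dvd_pow h2 two_ne_zero) u)
  have : c ∣ w := by exact_mod_cast hcz
  rw [hw]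
  exact mul_dvd_mul_left _ this

lemma fib_three : fib 3 = 2 := rfl

lemma dvd_of_fib_dvd {m k : ℕ} (hm : 3 ≤ m) (h : fib m ∣ fib k) : m ∣ k := by
  have hg : fib m ∣ fib (Nat.gcd m k) := by
    rw [Nat.fib_gcd]; exact Nat.dvd_gcd dvd_rfl h
  have hgpos : 0 < Nat.gcd m k := Nat.gcd_pos_of_pos_left _ (by omega)
  have hle : fib m ≤ fib (Nat.gcd m k) := Nat.le_of_dvd (Nat.fib_pos.mpr hgpos) hg
  have hfm2 : 2 ≤ fib m := by
    calc 2 = fib 3 := rfl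
    _ ≤ fib m := Nat.fib_mono hm
  have hgem : ¬ (Nat.gcd m k < m) := by
    intro hlt
    by_cases h2 : 2 ≤ Nat.gcd m k
    · have := (Nat.fib_lt_fib h2).mpr hlt
      omega
    · have hgcd1 : Nat.gcd m k = 1 := by omega
      rw [hgcd1] at hle
      simp [Nat.fib_one] at hle
      omega
  have hgle : Nat.gcd m k ≤ m := Nat.le_of_dvd (by omega) (Nat.gcd_dvd_left m k)
  have heq : Nat.gcd m k = m := by omega
  exact heq ▸ Nat.gcd_dvd_right m k

lemma three_dvd_of_two_dvd {k : ℕ} (h : 2 ∣ fib k) : 3 ∣ k := by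
  have h2 : 2 ∣ fib (Nat.gcd 3 k) := by
    rw [Nat.fib_gcd]
    exact Nat.dvd_gcd (by rw [fib_three]) h
  rcases (Nat.dvd_prime (by norm_num)).mp (Nat.gcd_dvd_left 3 k) with h1 | h3
  · rw [h1] at h2; norm_num [Nat.fib_one] at h2
  · exact h3 ▸ Nat.gcd_dvd_right 3 k

lemma two_dvd_fib_of_three_dvd {k : ℕ} (h : 3 ∣ k) : 2 ∣ fib k :=
  fib_three ▸ Nat.fib_dvd 3 k h

lemma fib_mod_four (j : ℕ) : fib (6*j+3) % 4 = 2 := by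
  induction j with
  | zero => rfl
  | succ j ih =>
    have h : fib (6*j+3+5+1) = fib (6*j+3) * fib 5 + fib (6*j+3+1) * fib 6 :=
      Nat.fib_add (6*j+3) 5
    rw [show 6*j+3+5+1 = 6*(j+1)+3 by ring] at h
    rw [h, show fib 5 = 5 from rfl, show fib 6 = 8 from rfl]
    omega

lemma four_dvd_fib_of_six_dvd {k : ℕ} (h : 6 ∣ k) : 4 ∣ fib k :=
  dvd_trans (by norm_num) (show fib 6 ∣ fib k from Nat.fib_dvd 6 k h)

lemma fact_le_of_dvd {x y : ℕ} (hx : x ≠ 0) (hy : y ≠ 0) (h : x ∣ y) (p : ℕ) :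
    x.factorization p ≤ y.factorization p :=
  Finsupp.le_def.mp ((Nat.factorization_le_iff_dvd hx hy).mpr h) p

/-- Auxiliary contradiction: `m` even, `n` odd, `3 ∣ gcd`, `t` odd. -/
lemma aux_even {m n t : ℕ} (hm : 3 ≤ m) (hn : 3 ≤ n) (h3 : 3 ∣ Nat.gcd m n)
    (hme : 2 ∣ m) (hno : ¬ 2 ∣ n) (ht : ¬ 2 ∣ t) (ht1 : 1 ≤ t)
    (hdvdk : fib m * fib n ∣ fib (Nat.lcm m n * t)) : False := by
  set d := Nat.gcd m n with hd
  set L := Nat.lcm m n with hL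
  have hdm : d ∣ m := Nat.gcd_dvd_left m n
  have hdn : d ∣ n := Nat.gcd_dvd_right m n
  have hmL : m ∣ L := Nat.dvd_lcm_left m n
  have hnL : n ∣ L := Nat.dvd_lcm_right m n
  have hLpos : 0 < L := Nat.pos_of_ne_zero
    (Nat.lcm_ne_zero (show m ≠ 0 by omega) (show n ≠ 0 by omega))
  have h3m : 3 ∣ m := h3.trans hdm
  have h3n : 3 ∣ n := h3.trans hdn
  have h6m : 6 ∣ m := by omega
  have h6L : 6 ∣ L := h6m.trans hmL
  have h4m : 4 ∣ fib m := four_dvd_fib_of_six_dvd h6m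
  have h4L : 4 ∣ fib L := four_dvd_fib_of_six_dvd h6L
  -- L = m * (n / d)
  have hdpos : 0 < d := Nat.gcd_pos_of_pos_left _ (by omega)
  have he : L = m * (n / d) := by
    rw [hL, Nat.lcm, Nat.mul_div_assoc m hdn]
  have heodd : ¬ 2 ∣ (n / d) := by
    intro h2e
    exact hno (Dvd.dvd.trans (dvd_mul_of_dvd_right h2e d) (by
      rw [Nat.mul_div_cancel' hdn]))
  have hepos : 1 ≤ n / d := Nat.one_le_div_iff hdpos |>.mpr (Nat.le_of_dvd (by omega) hdn)
  have hp2 : Nat.Prime 2 := Nat.prime_two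
  -- valuations
  have hv1 : (fib (L * t)).factorization 2 = (fib L).factorization 2 := by
    rw [lte_main hp2 (by omega) (Or.inr ⟨rfl, h4L⟩) t ht1,
      Nat.factorization_eq_zero_of_not_dvd ht]
    omega
  have hv2 : (fib L).factorization 2 = (fib m).factorization 2 := by
    rw [he, lte_main hp2 (by omega) (Or.inr ⟨rfl, h4m⟩) (n / d) hepos,
      Nat.factorization_eq_zero_of_not_dvd heodd]
    omega
  have h2n : 2 ∣ fib n := two_dvd_fib_of_three_dvd h3n
  have hfm0 : fib m ≠ 0 := fib_pos' (by omega)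
  have hfn0 : fib n ≠ 0 := fib_pos' (by omega)
  have hfLt0 : fib (L * t) ≠ 0 := fib_pos' (Nat.mul_pos hLpos ht1)
  have hle := fact_le_of_dvd (Nat.mul_ne_zero hfm0 hfn0) hfLt0 hdvdk 2
  rw [Nat.factorization_mul hfm0 hfn0] at hle
  have hn1 : 1 ≤ (fib n).factorization 2 :=
    (hp2.pow_dvd_iff_le_factorization hfn0).mp (by simpa using h2n)
  simp only [Finsupp.add_apply] at hle
  omega

theorem z_fib_mul_fib' (m n : ℕ) (hm : 3 ≤ m) (hn : 3 ≤ n) :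
    sInf {k : ℕ | 0 < k ∧ (fib m * fib n) ∣ fib k} = Nat.lcm m n * fib (Nat.gcd m n) := by
  set d := Nat.gcd m n with hd
  set L := Nat.lcm m n with hL
  have hdm : d ∣ m := Nat.gcd_dvd_left m n
  have hdn : d ∣ n := Nat.gcd_dvd_right m n
  have hmL : m ∣ L := Nat.dvd_lcm_left m n
  have hnL : n ∣ L := Nat.dvd_lcm_right m n
  have hdpos : 0 < d := Nat.gcd_pos_of_pos_left _ (by omega)
  have hLpos : 0 < L := Nat.pos_of_ne_zero
    (Nat.lcm_ne_zero (show m ≠ 0 by omega) (show n ≠ 0 by omega))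
  have hL3 : 3 ≤ L := le_trans hm (Nat.le_of_dvd hLpos hmL)
  have hfd1 : 1 ≤ fib d := Nat.fib_pos.mpr hdpos
  have hfd0 : fib d ≠ 0 := by omega
  have hfm0 : fib m ≠ 0 := fib_pos' (by omega)
  have hfn0 : fib n ≠ 0 := fib_pos' (by omega)
  have hfgcd : fib d = Nat.gcd (fib m) (fib n) := Nat.fib_gcd m n
  -- upper bound
  have hupper : fib m * fib n ∣ fib (L * fib d) := by
    have h1 : fib L * fib d ∣ fib (L * fib d) :=
      fib_mul_dvd (by omega) (Nat.fib_dvd d L (hdm.trans hmL)) dvd_rfl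
    have h3 : Nat.lcm (fib m) (fib n) ∣ fib L :=
      Nat.lcm_dvd (Nat.fib_dvd _ _ hmL) (Nat.fib_dvd _ _ hnL)
    have h2 : fib m * fib n ∣ fib L * fib d := by
      calc fib m * fib n = Nat.gcd (fib m) (fib n) * Nat.lcm (fib m) (fib n) :=
            (Nat.gcd_mul_lcm _ _).symm
      _ = fib d * Nat.lcm (fib m) (fib n) := by rw [hfgcd]
      _ ∣ fib d * fib L := mul_dvd_mul_left _ h3
      _ = fib L * fib d := mul_comm _ _
    exact h2.trans h1
  -- lower bound
  have hlower : ∀ k, 0 < k → fib m * fib n ∣ fib k → L * fib d ∣ k := by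
    intro k hk hdvdk
    have hmk : m ∣ k := dvd_of_fib_dvd hm ((dvd_mul_right _ _).trans hdvdk)
    have hnk : n ∣ k := dvd_of_fib_dvd hn ((dvd_mul_left _ _).trans hdvdk)
    have hLk : L ∣ k := Nat.lcm_dvd hmk hnk
    obtain ⟨t, rfl⟩ := hLk
    have ht1 : 1 ≤ t := by
      rcases Nat.eq_zero_or_pos t with rfl | h
      · simp at hk
      · exact h
    suffices hft : fib d ∣ t from mul_dvd_mul_left L hft
    rw [← Nat.factorization_le_iff_dvd hfd0 (by omega), Finsupp.le_def]
    intro p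
    by_cases hp : p.Prime
    swap
    · simp [Nat.factorization_eq_zero_of_not_prime _ hp]
    by_cases hpd : p ∣ fib d
    swap
    · simp [Nat.factorization_eq_zero_of_not_dvd hpd]
    -- preliminaries
    have hLme : L = m * (n / d) := by
      rw [hL, Nat.lcm, Nat.mul_div_assoc m hdn]
    have hepos : 1 ≤ n / d := Nat.one_le_div_iff hdpos |>.mpr (Nat.le_of_dvd (by omega) hdn)
    have hfLt0 : fib (L * t) ≠ 0 := fib_pos' (Nat.mul_pos hLpos ht1)
    have hfL0 : fib L ≠ 0 := fib_pos' (by omega)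
    have hle := fact_le_of_dvd (Nat.mul_ne_zero hfm0 hfn0) hfLt0 hdvdk p
    rw [Nat.factorization_mul hfm0 hfn0] at hle
    simp only [Finsupp.add_apply] at hle
    -- trio case: valuations via LTE
    have main : ∀ (H : (Odd p ∧ p ∣ fib d) ∨ (p = 2 ∧ 4 ∣ fib d)),
        (fib d).factorization p ≤ t.factorization p := by
      intro H
      have Hm : (Odd p ∧ p ∣ fib m) ∨ (p = 2 ∧ 4 ∣ fib m) := by
        have hdvd : fib d ∣ fib m := Nat.fib_dvd d m hdm
        rcases H with ⟨ho, h⟩ | ⟨rfl, h⟩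
        · exact Or.inl ⟨ho, h.trans hdvd⟩
        · exact Or.inr ⟨rfl, h.trans hdvd⟩
      have HL : (Odd p ∧ p ∣ fib L) ∨ (p = 2 ∧ 4 ∣ fib L) := by
        have hdvd : fib m ∣ fib L := Nat.fib_dvd m L hmL
        rcases Hm with ⟨ho, h⟩ | ⟨rfl, h⟩
        · exact Or.inl ⟨ho, h.trans hdvd⟩
        · exact Or.inr ⟨rfl, h.trans hdvd⟩
      have hvn : (fib n).factorization p =
          (fib d).factorization p + (n / d).factorization p := by
        have := lte_main hp (by omega : 1 ≤ d) H (n / d) hepos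
        rw [Nat.mul_div_cancel' hdn] at this
        exact this
      have hvL : (fib L).factorization p =
          (fib m).factorization p + (n / d).factorization p := by
        have := lte_main hp (by omega : 1 ≤ m) Hm (n / d) hepos
        rw [← hLme] at this
        exact this
      have hvLt : (fib (L * t)).factorization p =
          (fib L).factorization p + t.factorization p :=
        lte_main hp (by omega : 1 ≤ L) HL t ht1
      omega
    -- case split on p
    by_cases hp2 : p = 2
    swap
    · exact main (Or.inl ⟨hp.odd_of_ne_two hp2, hpd⟩)
    · subst hp2
      have h3d : 3 ∣ d := three_dvd_of_two_dvd hpd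
      by_cases hde : 2 ∣ d
      · exact main (Or.inr ⟨rfl, four_dvd_fib_of_six_dvd (by omega)⟩)
      · -- d odd, d % 6 = 3
        have hd63 : d % 6 = 3 := by omega
        obtain ⟨j, hj⟩ : ∃ j, d = 6*j+3 := ⟨d / 6, by omega⟩
        have hfd4 : fib d % 4 = 2 := hj ▸ fib_mod_four j
        have hvd : (fib d).factorization 2 = 1 := by
          have hv1 : 1 ≤ (fib d).factorization 2 :=
            (hp.pow_dvd_iff_le_factorization hfd0).mp (by simpa using hpd)
          have hv2 : ¬ 2 ≤ (fib d).factorization 2 := by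
            intro h
            have := (hp.pow_dvd_iff_le_factorization hfd0).mpr h
            norm_num at this
            omega
          omega
        rw [hvd]
        -- show 2 ∣ t
        have h2t : 2 ∣ t := by
          by_contra ht2
          have hmn2 : ¬ (2 ∣ m ∧ 2 ∣ n) := by
            rintro ⟨h2m, h2n⟩
            exact hde (Nat.dvd_gcd h2m h2n)
          by_cases h2m : 2 ∣ m
          · have h2n : ¬ 2 ∣ n := fun h => hmn2 ⟨h2m, h⟩
            exact aux_even hm hn (h3d) h2m h2n ht2 ht1 hdvdk
          · by_cases h2n : 2 ∣ n
            · refine aux_even hn hm ?_ h2n h2m ht2 ht1 ?_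
              · rw [Nat.gcd_comm]; exact h3d
              · rw [Nat.lcm_comm, mul_comm (fib n)]; exact hdvdk
            · -- both odd : L*t odd, ≡ 3 mod 6
              have h3m : 3 ∣ m := h3d.trans hdm
              have h3n : 3 ∣ n := h3d.trans hdn
              have h2fm : 2 ∣ fib m := two_dvd_fib_of_three_dvd h3m
              have h2fn : 2 ∣ fib n := two_dvd_fib_of_three_dvd h3n
              have h4 : 4 ∣ fib (L * t) :=
                dvd_trans (mul_dvd_mul h2fm h2fn) hdvdk
              have hLodd : ¬ 2 ∣ L := by
                intro h2L
                rw [hLme] at h2L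
                rcases (Nat.Prime.dvd_mul Nat.prime_two).mp h2L with h | h
                · exact h2m h
                · exact h2n (Dvd.dvd.trans (dvd_mul_of_dvd_right h d) (by
                    rw [Nat.mul_div_cancel' hdn]))
              have h3L : 3 ∣ L := h3m.trans hmL
              have hLt63 : (L * t) % 6 = 3 := by
                have h2Lt : ¬ 2 ∣ L * t := by
                  intro h
                  rcases (Nat.Prime.dvd_mul Nat.prime_two).mp h with h | h
                  · exact hLodd h
                  · exact ht2 h
                have h3Lt : 3 ∣ L * t := Dvd.dvd.mul_right h3L t
                omega
              obtain ⟨i, hi⟩ : ∃ i, L * t = 6*i+3 := ⟨(L * t) / 6, by omega⟩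
              have := hi ▸ fib_mod_four i
              omega
        exact (hp.pow_dvd_iff_le_factorization (by omega)).mp (by simpa using h2t)

  have hmem : L * fib d ∈ {k : ℕ | 0 < k ∧ fib m * fib n ∣ fib k} :=
    ⟨Nat.mul_pos hLpos hfd1, hupper⟩
  have hne : {k : ℕ | 0 < k ∧ fib m * fib n ∣ fib k}.Nonempty := ⟨_, hmem⟩
  have hinf := Nat.sInf_mem hne
  exact le_antisymm (Nat.sInf_le hmem) (Nat.le_of_dvd hinf.1 (hlower _ hinf.1 hinf.2))

theorem z_fib_mul_fib (m n : ℕ) (hm : 3 ≤ m) (hn : 3 ≤ n) :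
    z (Nat.fib m * Nat.fib n) = Nat.lcm m n * Nat.fib (Nat.gcd m n) :=
  z_fib_mul_fib' m n hm hn
end

section
/- Let m, n ≥ 3 be integers. If m ≡ n ≡ 0 (mod 3), then z(L_m · L_n) = [m, n] · gcd(L_m, L_n); otherwise z(L_m · L_n) = 2·[m, n] · gcd(L_m, L_n). -/
open Nat




lemma lucas_add_fib (k : ℕ) : lucas k + fib k = 2 * fib (k+1) := by
  induction k using Nat.twoStepInduction with
  | zero => simp [lucas]
  | one => simp [lucas]
  | more k ih1 ih2 =>
    have h := Nat.fib_add_two (n := k)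
    have h2 := Nat.fib_add_two (n := k+1)
    simp only [lucas, show k+1+1=k+2 from rfl, show k+1+2=k+3 from rfl,
      show k+2+1=k+3 from rfl, show k+2+2=k+4 from rfl] at *
    omega

lemma lucas_pos (k : ℕ) : 0 < lucas k := by
  have h1 := lucas_add_fib k
  have h2 : 0 < fib (k+1) := by simp
  have h3 : fib k ≤ fib (k+1) := Nat.fib_le_fib_succ
  omega

lemma fib_two_mul' (k : ℕ) : fib (2*k) = fib k * lucas k := by
  have h := Nat.fib_two_mul k
  have h2 := lucas_add_fib k
  have h3 : fib k ≤ fib (k+1) := Nat.fib_le_fib_succ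
  rw [h]
  congr 1
  omega

lemma fib_succ_le_lucas (k : ℕ) (hk : 1 ≤ k) : fib (k+1) ≤ lucas k := by
  have h := lucas_add_fib k
  have h3 : fib k ≤ fib (k+1) := Nat.fib_le_fib_succ
  omega

-- existence of order of appearance
lemma exists_fib_dvd (a : ℕ) (ha : 0 < a) : ∃ k, 0 < k ∧ a ∣ fib k := by
  haveI : NeZero a := ⟨ha.ne'⟩
  set q : ℕ → ZMod a × ZMod a := fun k => ((fib k : ZMod a), (fib (k+1) : ZMod a)) with hq
  obtain ⟨i, j, hne, heq⟩ := Finite.exists_ne_map_eq_of_infinite q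
  wlog hij : i < j generalizing i j
  · exact this j i hne.symm heq.symm (by omega)
  have down : ∀ d i, q i = q (i + d) → q 0 = q d := by
    intro d i
    induction i with
    | zero => simpa using id
    | succ i ih =>
      intro h
      apply ih
      have h1 : (fib (i+1) : ZMod a) = fib (i+1+d) := congrArg Prod.fst h
      have h2 : (fib (i+2) : ZMod a) = fib (i+2+d) := by
        have := congrArg Prod.snd h
        simpa [hq, show i+1+1 = i+2 by ring, show i+1+d+1 = i+2+d by ring] using this
      have e1 : (fib i : ZMod a) = (fib (i+2) : ZMod a) - fib (i+1) := by
        rw [Nat.fib_add_two]; push_cast; ring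
      have e2 : (fib (i+d) : ZMod a) = (fib (i+2+d) : ZMod a) - fib (i+1+d) := by
        rw [show i+2+d = (i+d)+2 by ring, Nat.fib_add_two]
        push_cast; rw [show i+1+d = (i+d)+1 by ring]; ring
      simp only [hq, Prod.mk.injEq]
      constructor
      · rw [e1, e2, h1, h2]
      · exact h1.trans (by rw [show i+1+d = i+d+1 by ring])
  have h0 : q 0 = q (j - i) := by
    apply down (j - i) i
    rw [show i + (j - i) = j by omega]
    exact heq
  refine ⟨j - i, by omega, ?_⟩
  have : (fib (j-i) : ZMod a) = 0 := by
    have := congrArg Prod.fst h0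
    simp [hq] at this
    exact this.symm
  exact (ZMod.natCast_eq_zero_iff _ _).mp this



lemma z_mem (a : ℕ) (ha : 0 < a) : 0 < z a ∧ a ∣ fib (z a) := by
  have h : {k : ℕ | 0 < k ∧ a ∣ fib k}.Nonempty := exists_fib_dvd a ha
  exact Nat.sInf_mem h

lemma z_min {a k : ℕ} (hk : 0 < k) (h : a ∣ fib k) : z a ≤ k := Nat.sInf_le ⟨hk, h⟩

lemma dvd_fib_iff (a : ℕ) (ha : 0 < a) (k : ℕ) : a ∣ fib k ↔ z a ∣ k := by
  obtain ⟨hz, hdvd⟩ := z_mem a ha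
  constructor
  · intro h
    rcases Nat.eq_zero_or_pos k with rfl | hk
    · exact Dvd.intro 0 rfl
    have hg : a ∣ fib (Nat.gcd k (z a)) := by
      rw [Nat.fib_gcd]; exact Nat.dvd_gcd h hdvd
    have hgpos : 0 < Nat.gcd k (z a) := Nat.gcd_pos_of_pos_left _ hk
    have h1 : z a ≤ Nat.gcd k (z a) := z_min hgpos hg
    have h2 : Nat.gcd k (z a) ∣ z a := Nat.gcd_dvd_right _ _
    have h3 : Nat.gcd k (z a) = z a :=
      Nat.le_antisymm (Nat.le_of_dvd hz h2) h1
    rw [← h3]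
    exact Nat.gcd_dvd_left _ _
  · intro h
    exact dvd_trans hdvd (Nat.fib_dvd _ _ h)

lemma z_eq (a K : ℕ) (ha : 0 < a) (hK : 0 < K) (h : ∀ k, a ∣ fib k ↔ K ∣ k) : z a = K := by
  have h1 : z a ≤ K := z_min hK ((h K).mpr dvd_rfl)
  have h2 : K ∣ z a := (h _).mp (z_mem a ha).2
  exact Nat.le_antisymm h1 (Nat.le_of_dvd (z_mem a ha).1 h2)


lemma gcd_lucas_fib_dvd_two (k : ℕ) : Nat.gcd (lucas k) (fib k) ∣ 2 := by
  set d := Nat.gcd (lucas k) (fib k) with hd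
  have h1 : d ∣ lucas k := Nat.gcd_dvd_left _ _
  have h2 : d ∣ fib k := Nat.gcd_dvd_right _ _
  have h3 : d ∣ 2 * fib (k+1) := by
    rw [← lucas_add_fib]; exact Nat.dvd_add h1 h2
  have h4 : Nat.Coprime d (fib (k+1)) :=
    Nat.Coprime.coprime_dvd_left h2 (Nat.fib_coprime_fib_succ k)
  exact (Nat.Coprime.dvd_of_dvd_mul_right h4 h3)

lemma three_le_lucas (m : ℕ) (hm : 3 ≤ m) : 3 ≤ lucas m := by
  have h1 : fib (m+1) ≤ lucas m := fib_succ_le_lucas m (by omega)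
  have h2 : fib 4 ≤ fib (m+1) := Nat.fib_mono (by omega)
  have : fib 4 = 3 := rfl
  omega

lemma lucas_dvd_fib_iff (m k : ℕ) (hm : 3 ≤ m) : lucas m ∣ fib k ↔ 2*m ∣ k := by
  constructor
  · intro h
    rcases Nat.eq_zero_or_pos k with rfl | hk
    · exact Dvd.intro 0 rfl
    have hL3 := three_le_lucas m hm
    have hdm : lucas m ∣ fib (2*m) := by rw [fib_two_mul']; exact Dvd.intro_left _ rfl
    set d := Nat.gcd k (2*m) with hdd
    have hd : lucas m ∣ fib d := by
      rw [hdd, Nat.fib_gcd]; exact Nat.dvd_gcd h hdm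
    obtain ⟨q, hq⟩ : d ∣ 2*m := Nat.gcd_dvd_right _ _
    have hdpos : 0 < d := Nat.gcd_pos_of_pos_left _ hk
    rcases Nat.even_or_odd q with ⟨q', hq'⟩ | hodd
    · -- q even ⇒ d ∣ m ⇒ contradiction
      exfalso
      have hdm' : d ∣ m := ⟨q', by
        have h2 : 2*m = d*q' + d*q' := by rw [hq, hq']; ring
        omega⟩
      have : lucas m ∣ fib m := hd.trans (Nat.fib_dvd _ _ hdm')
      have h2 : lucas m ∣ 2 := (Nat.dvd_gcd dvd_rfl this).trans (gcd_lucas_fib_dvd_two m)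
      have := Nat.le_of_dvd (by norm_num) h2
      omega
    · -- q odd
      have h2d : 2 ∣ d := by
        rcases hodd with ⟨c, hc⟩
        rcases Nat.even_or_odd d with ⟨w, hw⟩ | ⟨w, hw⟩
        · exact ⟨w, by omega⟩
        · exfalso
          have : 2*m = 4*(w*c)+2*w+2*c+1 := by rw [hq, hw, hc]; ring
          omega
      obtain ⟨w, hw⟩ := h2d
      have hwm : m = w * q := by
        have : 2*m = 2*(w*q) := by rw [hq, hw]; ring
        omega
      rcases Nat.lt_or_ge q 2 with hq1 | hq3
      · -- q = 1 (q=0 impossible), so d = 2m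
        have hq1' : q = 1 := by
          rcases hodd with ⟨c, hc⟩
          rcases Nat.eq_zero_or_pos m with rfl | _
          · omega
          · by_contra hne
            have : 2 ≤ q := by omega
            omega
        rw [hq1', mul_one] at hwm
        have hd2m : d = 2*m := by omega
        rw [← hd2m]
        exact Nat.gcd_dvd_left _ _
      · -- q ≥ 3 (odd so q ≥ 3): size contradiction
        exfalso
        have hq3' : 3 ≤ q := by rcases hodd with ⟨c, hc⟩; omega
        have hw1 : 1 ≤ w := by
          rcases Nat.eq_zero_or_pos w with rfl | h
          · simp at hwm; omega
          · omega
        have hm3w : 3*w ≤ m := by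
          have h1 : 3*w ≤ w*q := by
            calc 3*w = w*3 := by ring
            _ ≤ w*q := Nat.mul_le_mul_left w hq3'
          omega
        have hle : lucas m ≤ fib d := Nat.le_of_dvd (by simp [Nat.fib_pos]; omega) hd
        have h5 : fib d = fib (2*w) := by rw [hw]
        have h6 : fib (m+1) ≤ lucas m := fib_succ_le_lucas m (by omega)
        have h7 : fib (2*w+2) ≤ fib (m+1) := Nat.fib_mono (by omega)
        have h8 : fib (2*w+2) = fib (2*w) + fib (2*w+1) := by
          rw [Nat.fib_add_two]
        have h9 : 0 < fib (2*w+1) := by simp [Nat.fib_pos]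
        omega
  · intro h
    have h1 : lucas m ∣ fib (2*m) := ⟨fib m, by rw [fib_two_mul']; ring⟩
    exact h1.trans (Nat.fib_dvd _ _ h)


lemma fibZ_A (M T : ℕ) :
    (fib ((M+1)*(T+1)) : ℤ)
      = fib ((M+1)*T) * fib M + fib ((M+1)*T + 1) * fib (M+1) := by
  have h := Nat.fib_add ((M+1)*T) M
  have e : (M+1)*T + M + 1 = (M+1)*(T+1) := by ring
  rw [e] at h
  exact_mod_cast h

lemma fibZ_B (M T : ℕ) :
    (fib ((M+1)*(T+1) + 1) : ℤ)
      = fib (M+1) * fib ((M+1)*T) + (fib M + fib (M+1)) * fib ((M+1)*T + 1) := by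
  have h := Nat.fib_add M ((M+1)*T+1)
  have e : M + ((M+1)*T+1) + 1 = (M+1)*(T+1)+1 := by ring
  rw [e] at h
  have h2 : fib ((M+1)*T+1+1) = fib ((M+1)*T) + fib ((M+1)*T+1) := by
    have := Nat.fib_add_two (n := (M+1)*T); rw [this]
  rw [h2] at h
  have := congrArg (fun x : ℕ => (x : ℤ)) h
  push_cast at this
  rw [this]; ring

lemma key (M t : ℕ) : ∃ u v : ℤ,
    (fib ((M+1)*(t+1)) : ℤ) = (t+1) * fib (M+1) * (fib M)^t + (fib (M+1))^2 * u ∧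
    (fib ((M+1)*(t+1) + 1) : ℤ)
      = (fib M)^(t+1) + (t+1) * fib (M+1) * (fib M)^t + (fib (M+1))^2 * v ∧
    ((fib (M+1) : ℤ) ∣ fib M * u - ((t+1).choose 2) * (fib M)^t) ∧
    ((fib (M+1) : ℤ) ∣ fib M * v - 2 * ((t+1).choose 2) * (fib M)^t) := by
  induction t with
  | zero =>
    refine ⟨0, 0, ?_, ?_, ?_, ?_⟩ <;> simp [Nat.fib_add_two]
  | succ T ih =>
    obtain ⟨u, v, hA, hB, hu, hv⟩ := ih
    set F : ℤ := (fib M : ℤ) with hF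
    set f : ℤ := (fib (M+1) : ℤ) with hf
    have hch : ((T+2).choose 2 : ℤ) = (T+1).choose 2 + (T+1) := by
      have h0 : (T+2).choose 2 = (T+1).choose 1 + (T+1).choose 2 :=
        Nat.choose_succ_succ (T+1) 1
      rw [h0, Nat.choose_one_right]
      push_cast; ring
    refine ⟨u*F + (T+1)*F^T + f*v, 2*(T+1)*F^T + f*u + v*F + f*v, ?_, ?_, ?_, ?_⟩
    · rw [fibZ_A M (T+1), hA, hB]
      push_cast
      ring
    · rw [fibZ_B M (T+1), hA, hB]
      push_cast
      ring
    · have e : F * (u*F + (T+1)*F^T + f*v) - ((T+2).choose 2 : ℤ) * F^(T+1)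
          = (F*u - ((T+1).choose 2) * F^T)*F + f*(F*v) := by
        rw [hch]; ring
      rw [show ((T+1)+1 : ℕ) = T+2 from rfl, e]
      exact dvd_add (hu.mul_right F) (Dvd.intro _ rfl)
    · have e : F * (2*(T+1)*F^T + f*u + v*F + f*v) - 2*((T+2).choose 2 : ℤ) * F^(T+1)
          = (F*v - 2*((T+1).choose 2) * F^T)*F + f*(F*u + F*v) := by
        rw [hch]; ring
      rw [show ((T+1)+1 : ℕ) = T+2 from rfl, e]
      exact dvd_add (hv.mul_right F) (Dvd.intro _ rfl)



lemma coprime_of_dvd_fib_sq {c M : ℕ} (hc : c ∣ fib (M+1) * fib (M+1)) :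
    Nat.Coprime c (fib M) := by
  have h1 : Nat.Coprime (fib (M+1)) (fib M) := (Nat.fib_coprime_fib_succ M).symm
  have h2 : Nat.Coprime (fib (M+1) * fib (M+1)) (fib M) := Nat.Coprime.mul h1 h1
  exact Nat.Coprime.coprime_dvd_left hc h2

lemma dvd_fib_mul_iff {c M : ℕ} (hc : c ∣ fib (M+1) * fib (M+1)) (t : ℕ) :
    c ∣ fib ((M+1)*t) ↔ c ∣ t * fib (M+1) := by
  rcases t with _ | T
  · simp
  obtain ⟨u, v, hA, _, _, _⟩ := key M T
  have hcop : Nat.Coprime c (fib M) := coprime_of_dvd_fib_sq hc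
  have hcopPow : Nat.Coprime c ((fib M)^T) := Nat.Coprime.pow_right T hcop
  have hc2 : (c : ℤ) ∣ (fib (M+1) : ℤ)^2 * u := by
    have : (c : ℤ) ∣ (fib (M+1) : ℤ)^2 := by
      have := Int.natCast_dvd_natCast.mpr hc
      push_cast at this
      convert this using 1; ring
    exact this.mul_right u
  have hmain : c ∣ fib ((M+1)*(T+1)) ↔ (c:ℤ) ∣ ((T+1) * fib (M+1) * (fib M)^T : ℤ) := by
    constructor
    · intro h
      have h' : (c : ℤ) ∣ (fib ((M+1)*(T+1)) : ℤ) := Int.natCast_dvd_natCast.mpr h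
      rw [hA] at h'
      exact (Int.dvd_add_right hc2).mp (by rwa [add_comm] at h')
    · intro h
      have : (c : ℤ) ∣ (fib ((M+1)*(T+1)) : ℤ) := by
        rw [hA]; exact dvd_add h hc2
      exact_mod_cast this
  rw [hmain]
  have hnat : ((T+1) * fib (M+1) * (fib M)^T : ℤ) = (((T+1) * fib (M+1) * (fib M)^T : ℕ) : ℤ) := by
    push_cast; ring
  rw [hnat, Int.natCast_dvd_natCast]
  constructor
  · intro h
    exact hcopPow.dvd_of_dvd_mul_right h
  · intro h
    exact Dvd.dvd.mul_right h _

lemma dvd_div_gcd_iff {c b : ℕ} (hc : 0 < c) (t : ℕ) :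
    c ∣ t * b ↔ c / Nat.gcd c b ∣ t := by
  set g := Nat.gcd c b with hg
  have hgpos : 0 < g := Nat.gcd_pos_of_pos_left b hc
  obtain ⟨c', hc'⟩ : g ∣ c := Nat.gcd_dvd_left _ _
  obtain ⟨b', hb'⟩ : g ∣ b := Nat.gcd_dvd_right _ _
  have hcop : Nat.Coprime c' b' := by
    have h0 := Nat.coprime_div_gcd_div_gcd (m := c) (n := b) hgpos
    rw [← hg] at h0
    rwa [hc', hb', Nat.mul_div_cancel_left _ hgpos, Nat.mul_div_cancel_left _ hgpos] at h0
  have hdiv : c / g = c' := by rw [hc', Nat.mul_div_cancel_left _ hgpos]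
  rw [hdiv]
  constructor
  · intro h
    have h2 : g * c' ∣ g * (t * b') := by
      rw [← hc']; convert h using 1; rw [hb']; ring
    have h3 : c' ∣ t * b' := (Nat.mul_dvd_mul_iff_left hgpos).mp h2
    exact hcop.dvd_of_dvd_mul_right h3
  · intro h
    have : c' ∣ t := h
    calc c = g * c' := hc'
    _ ∣ g * t := Nat.mul_dvd_mul_left g this
    _ ∣ t * b := by rw [hb']; exact ⟨b', by ring⟩

lemma z_prod (c N : ℕ) (hN : 0 < N) (hc : 0 < c) (hcf : c ∣ fib N * fib N)
    (hNdvd : ∀ k, c ∣ fib k → N ∣ k) :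
    z c = N * (c / Nat.gcd c (fib N)) := by
  obtain ⟨M, rfl⟩ : ∃ M, N = M + 1 := ⟨N - 1, by omega⟩
  set t₀ := c / Nat.gcd c (fib (M+1)) with ht₀
  have ht₀pos : 0 < t₀ := by
    apply Nat.div_pos (Nat.le_of_dvd hc (Nat.gcd_dvd_left _ _))
      (Nat.gcd_pos_of_pos_left _ hc)
  apply z_eq _ _ hc (by positivity)
  intro k
  constructor
  · intro h
    obtain ⟨s, rfl⟩ := hNdvd k h
    have h2 : c ∣ s * fib (M+1) := (dvd_fib_mul_iff hcf s).mp h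
    have h3 : t₀ ∣ s := (dvd_div_gcd_iff hc s).mp h2
    exact Nat.mul_dvd_mul_left _ h3
  · intro h
    have h1 : c ∣ fib ((M+1) * t₀) := by
      rw [dvd_fib_mul_iff hcf]
      rw [dvd_div_gcd_iff hc]
    exact h1.trans (Nat.fib_dvd _ _ h)


lemma nu_eq {p x e : ℕ} (hp : p.Prime) (hx : x ≠ 0) (h1 : p^e ∣ x) (h2 : ¬p^(e+1) ∣ x) :
    x.factorization p = e := by
  have a := (hp.pow_dvd_iff_le_factorization hx).mp h1
  have b : ¬ (e+1 ≤ x.factorization p) := fun hle =>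
    h2 ((hp.pow_dvd_iff_le_factorization hx).mpr hle)
  omega

lemma not_dvd_fibM {p M : ℕ} (hp : p.Prime) (hpf : p ∣ fib (M+1)) :
    ¬ p ∣ fib M := by
  intro h
  have h1 : p ∣ Nat.gcd (fib M) (fib (M+1)) := Nat.dvd_gcd h hpf
  rw [Nat.fib_coprime_fib_succ M] at h1
  exact hp.one_lt.ne' (Nat.eq_one_of_dvd_one h1 ▸ rfl)

-- Claim A : if p ∤ t then ν_p (fib (N t)) = ν_p (fib N), given p ∣ fib N
lemma claimA {p M t : ℕ} (hp : p.Prime) (ht : ¬ p ∣ t) (hpf : p ∣ fib (M+1)) :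
    (fib ((M+1)*t)).factorization p = (fib (M+1)).factorization p := by
  rcases t with _ | T
  · exact absurd (dvd_zero p) ht
  set f := fib (M+1) with hf
  set e := f.factorization p with he
  have hfne : f ≠ 0 := (Nat.fib_pos.mpr (by omega)).ne'
  have hpe : p^e ∣ f := Nat.ordProj_dvd _ _
  have hpe1 : ¬ p^(e+1) ∣ f := Nat.pow_succ_factorization_not_dvd hfne hp
  have he1 : 1 ≤ e := by
    have := (hp.pow_dvd_iff_le_factorization hfne).mp (by rw [pow_one]; exact hpf)
    omega
  have hne : fib ((M+1)*(T+1)) ≠ 0 := (Nat.fib_pos.mpr (by positivity)).ne'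
  apply nu_eq hp hne
  · calc p^e ∣ f := hpe
    _ ∣ fib ((M+1)*(T+1)) := Nat.fib_dvd _ _ ⟨T+1, rfl⟩
  · intro hcon
    obtain ⟨u, v, hA, -, -, -⟩ := key M T
    have hsq : (p:ℤ)^(e+1) ∣ (f:ℤ)^2 * u := by
      have h1 : (p:ℤ)^e ∣ (f:ℤ) := by exact_mod_cast hpe
      have h2 : (p:ℤ)^(e+1) ∣ (f:ℤ)^2 := by
        calc (p:ℤ)^(e+1) ∣ (p:ℤ)^(2*e) := pow_dvd_pow _ (by omega)
        _ = ((p:ℤ)^e)^2 := by rw [mul_comm, pow_mul]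
        _ ∣ (f:ℤ)^2 := pow_dvd_pow_of_dvd h1 2
      exact h2.mul_right u
    have hcon' : (p:ℤ)^(e+1) ∣ (fib ((M+1)*(T+1)) : ℤ) := by exact_mod_cast hcon
    rw [hA] at hcon'
    have hterm : (p:ℤ)^(e+1) ∣ ((T+1) * f * (fib M)^T : ℤ) := by
      have heq : ((T+1) * f * (fib M)^T : ℤ)
          = ((T+1) * (fib (M+1)) * (fib M)^T + (fib (M+1))^2 * u) - (f:ℤ)^2 * u := by
        rw [hf]; ring
      rw [heq]
      exact dvd_sub hcon' hsq
    have hnat : p^(e+1) ∣ (T+1) * f * (fib M)^T := by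
      have : ((T+1) * f * (fib M)^T : ℤ) = (((T+1) * f * (fib M)^T : ℕ) : ℤ) := by push_cast; ring
      rw [this] at hterm
      exact_mod_cast hterm
    have hcop : Nat.Coprime (p^(e+1)) ((T+1) * (fib M)^T) := by
      have c1 : Nat.Coprime p (T+1) := (Nat.Prime.coprime_iff_not_dvd hp).mpr ht
      have c2 : Nat.Coprime p (fib M) :=
        (Nat.Prime.coprime_iff_not_dvd hp).mpr (not_dvd_fibM hp hpf)
      exact (Nat.Coprime.mul_right c1 (c2.pow_right T)).pow_left _
    have : p^(e+1) ∣ f := by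
      apply hcop.dvd_of_dvd_mul_right
      calc p^(e+1) ∣ (T+1) * f * (fib M)^T := hnat
      _ = f * ((T+1) * (fib M)^T) := by ring
    exact hpe1 this

-- Claim B : for odd p, ν_p (fib (N p)) = ν_p (fib N) + 1, given p ∣ fib N
lemma claimB {p M : ℕ} (hp : p.Prime) (hodd : p ≠ 2) (hpf : p ∣ fib (M+1)) :
    (fib ((M+1)*p)).factorization p = (fib (M+1)).factorization p + 1 := by
  set f := fib (M+1) with hf
  set e := f.factorization p with he
  have hfne : f ≠ 0 := (Nat.fib_pos.mpr (by omega)).ne'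
  have hpe : p^e ∣ f := Nat.ordProj_dvd _ _
  have hpe1 : ¬ p^(e+1) ∣ f := Nat.pow_succ_factorization_not_dvd hfne hp
  have he1 : 1 ≤ e := by
    have := (hp.pow_dvd_iff_le_factorization hfne).mp (by rw [pow_one]; exact hpf)
    omega
  have hp3 : 3 ≤ p := by
    have h2 := hp.two_le
    omega
  obtain ⟨T, hT⟩ : ∃ T, p = T + 1 := ⟨p - 1, by omega⟩
  obtain ⟨u, v, hA, -, hu, -⟩ := key M T
  rw [← hT] at hA hu
  have hTZ : ((T:ℤ)+1) = (p:ℤ) := by rw [hT]; push_cast; ring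
  rw [hTZ] at hA
  have hne : fib ((M+1)*p) ≠ 0 := (Nat.fib_pos.mpr (by positivity)).ne'
  have hpef : (p:ℤ)^e ∣ (f:ℤ) := by exact_mod_cast hpe
  have hpZ : (p:ℤ) ∣ (f:ℤ) := by
    exact_mod_cast Int.natCast_dvd_natCast.mpr ((dvd_pow_self p (by omega : e ≠ 0)).trans hpe)
  have hFnd : ¬ (p:ℤ) ∣ (fib M : ℤ) := by
    intro h
    exact not_dvd_fibM hp hpf (by exact_mod_cast h)
  have hsq : (p:ℤ)^(e+1) ∣ (f:ℤ)^2 * u := by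
    have h2 : (p:ℤ)^(e+1) ∣ (f:ℤ)^2 := by
      calc (p:ℤ)^(e+1) ∣ (p:ℤ)^(2*e) := pow_dvd_pow _ (by omega)
      _ = ((p:ℤ)^e)^2 := by rw [mul_comm, pow_mul]
      _ ∣ (f:ℤ)^2 := pow_dvd_pow_of_dvd hpef 2
    exact h2.mul_right u
  apply nu_eq hp hne
  · -- p^(e+1) ∣ fib (N p)
    have h1 : (p:ℤ)^(e+1) ∣ (p : ℤ) * f * (fib M)^T := by
      have h3 : (p:ℤ)^(e+1) = p^e * p := by ring
      have h4 : (p:ℤ)^e * p ∣ (f * p) := mul_dvd_mul hpef dvd_rfl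
      rw [h3]
      exact h4.trans ⟨(fib M : ℤ)^T, by ring⟩
    have h5 : (p:ℤ)^(e+1) ∣ (fib ((M+1)*p) : ℤ) := by
      rw [hA]; exact dvd_add h1 hsq
    exact_mod_cast h5
  · intro hcon
    -- first : p ∣ u
    have hchoose : (p:ℤ) ∣ ((p.choose 2 : ℕ) : ℤ) :=
      Int.natCast_dvd_natCast.mpr (hp.dvd_choose_self (by norm_num) (by omega))
    have hFu : (p:ℤ) ∣ (fib M : ℤ) * u := by
      have h6 : (p:ℤ) ∣ (fib M : ℤ) * u - (p.choose 2 : ℕ) * (fib M)^T := hpZ.trans hu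
      have h7 : (p:ℤ) ∣ ((p.choose 2 : ℕ) : ℤ) * (fib M)^T := hchoose.mul_right _
      have := dvd_add h6 h7
      simpa using this
    have hpu : (p:ℤ) ∣ u := by
      rcases (Int.Prime.dvd_mul' hp hFu) with h | h
      · exact absurd h hFnd
      · exact h
    have hsq2 : (p:ℤ)^(e+2) ∣ (f:ℤ)^2 * u := by
      have h2 : (p:ℤ)^(e+2) ∣ (p:ℤ)^(2*e+1) := pow_dvd_pow _ (by omega)
      have h8 : (p:ℤ)^(2*e+1) ∣ (f:ℤ)^2 * u := by
        have : (p:ℤ)^(2*e+1) = ((p:ℤ)^e)^2 * p := by ring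
        rw [this]
        exact mul_dvd_mul (pow_dvd_pow_of_dvd hpef 2) hpu
      exact h2.trans h8
    have hcon' : (p:ℤ)^(e+2) ∣ (fib ((M+1)*p) : ℤ) := by exact_mod_cast hcon
    rw [hA] at hcon'
    have hterm : (p:ℤ)^(e+2) ∣ ((p:ℤ) * f * (fib M)^T) := by
      have heq : ((p:ℤ) * f * (fib M)^T : ℤ)
          = ((p:ℤ) * (fib (M+1)) * (fib M)^T + (fib (M+1))^2 * u) - (f:ℤ)^2 * u := by
        rw [hf]; ring
      rw [heq]
      exact dvd_sub hcon' hsq2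
    have hnat : p^(e+2) ∣ p * f * (fib M)^T := by
      have hcast : ((p:ℤ) * f * (fib M)^T) = ((p * f * (fib M)^T : ℕ) : ℤ) := by push_cast; ring
      rw [hcast] at hterm
      exact_mod_cast hterm
    have hcop : Nat.Coprime (p^(e+2)) ((fib M)^T) := by
      have c2 : Nat.Coprime p (fib M) :=
        (Nat.Prime.coprime_iff_not_dvd hp).mpr (not_dvd_fibM hp hpf)
      exact Nat.Coprime.pow _ _ c2
    have h9 : p^(e+2) ∣ p * f := hcop.dvd_of_dvd_mul_right hnat
    have h10 : p^(e+1) ∣ f := by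
      have : p * p^(e+1) ∣ p * f := by
        rw [show p * p^(e+1) = p^(e+2) from by ring]
        exact h9
      exact (Nat.mul_dvd_mul_iff_left hp.pos).mp this
    exact hpe1 h10



lemma lte_fib {p N : ℕ} (hp : p.Prime) (hodd : p ≠ 2) (hN : 0 < N) (hpf : p ∣ fib N) :
    ∀ t, 0 < t → (fib (N*t)).factorization p
      = (fib N).factorization p + t.factorization p := by
  intro t
  induction t using Nat.strong_induction_on with
  | _ t ih =>
    intro ht
    obtain ⟨M, hM⟩ : ∃ M, N = M+1 := ⟨N-1, by omega⟩
    by_cases hdvd : p ∣ t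
    · obtain ⟨t', rfl⟩ := hdvd
      have ht' : 0 < t' := by
        rcases Nat.eq_zero_or_pos t' with rfl | h
        · simp at ht
        · exact h
      have hlt : t' < p * t' := by
        have h2 := hp.two_le
        calc t' = 1 * t' := (one_mul t').symm
        _ < p * t' := (Nat.mul_lt_mul_right ht').mpr (by omega)
      obtain ⟨M', hM'⟩ : ∃ M', N * t' = M' + 1 :=
        ⟨N*t' - 1, by have := Nat.mul_pos hN ht'; omega⟩
      have hpf' : p ∣ fib (M'+1) := by
        rw [← hM']
        exact hpf.trans (Nat.fib_dvd _ _ ⟨t', rfl⟩)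
      have h1 : N * (p * t') = (M'+1) * p := by rw [← hM']; ring
      rw [h1, claimB hp hodd hpf', ← hM']
      rw [ih t' hlt ht']
      have h2 : (p * t').factorization p = 1 + t'.factorization p := by
        rw [Nat.factorization_mul hp.pos.ne' ht'.ne']
        simp [hp.factorization_self]
      omega
    · rw [hM, claimA hp hdvd (hM ▸ hpf), Nat.factorization_eq_zero_of_not_dvd hdvd]
      omega

lemma not_dvd_fib_self {p k : ℕ} (hp : p.Prime) (hodd : p ≠ 2) (hpk : p ∣ lucas k) :
    ¬ p ∣ fib k := by
  intro h
  have h1 : p ∣ Nat.gcd (lucas k) (fib k) := Nat.dvd_gcd hpk h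
  have h2 : p ∣ 2 := h1.trans (gcd_lucas_fib_dvd_two k)
  have := (Nat.prime_dvd_prime_iff_eq hp Nat.prime_two).mp h2
  exact hodd this

-- ν_p of lucas m via LTE, for odd prime p dividing lucas m
lemma nu_lucas {p m : ℕ} (hp : p.Prime) (hodd : p ≠ 2) (hm : 0 < m) (hpm : p ∣ lucas m) :
    z p ∣ 2*m ∧
    (lucas m).factorization p + (z p).factorization p
      = (fib (z p)).factorization p + (2*m).factorization p := by
  have hppos := hp.pos
  obtain ⟨hZpos, hZdvd⟩ := z_mem p hppos
  set Z := z p with hZ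
  have hdvd2m : Z ∣ 2*m := by
    rw [← dvd_fib_iff p hppos]
    exact hpm.trans ⟨fib m, by rw [fib_two_mul']; ring⟩
  refine ⟨hdvd2m, ?_⟩
  obtain ⟨t, ht⟩ := hdvd2m
  have htpos : 0 < t := by
    rcases Nat.eq_zero_or_pos t with rfl | h
    · omega
    · exact h
  have hlte := lte_fib hp hodd hZpos hZdvd t htpos
  rw [← ht] at hlte
  -- ν_p (fib (2m)) = ν_p (fib m) + ν_p (lucas m), and ν_p fib m = 0
  have hmul : (fib (2*m)).factorization p
      = (fib m).factorization p + (lucas m).factorization p := by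
    rw [fib_two_mul', Nat.factorization_mul (Nat.fib_pos.mpr hm).ne' (lucas_pos m).ne']
    simp
  have hfm : (fib m).factorization p = 0 :=
    Nat.factorization_eq_zero_of_not_dvd (not_dvd_fib_self hp hodd hpm)
  have hZt : (2*m).factorization p = Z.factorization p + t.factorization p := by
    rw [ht, Nat.factorization_mul hZpos.ne' htpos.ne']
    simp
  omega

lemma odd_prime_nu_eq (p m n : ℕ) (hp : p.Prime) (hodd : p ≠ 2)
    (hm : 0 < m) (hn : 0 < n) (hpm : p ∣ lucas m) (hpn : p ∣ lucas n) :
    (fib (2 * Nat.lcm m n)).factorization p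
      = (Nat.lcm (lucas m) (lucas n)).factorization p := by
  have hppos := hp.pos
  obtain ⟨hZpos, hZdvd⟩ := z_mem p hppos
  set Z := z p with hZ
  obtain ⟨hdm, hem⟩ := nu_lucas hp hodd hm hpm
  obtain ⟨hdn, hen⟩ := nu_lucas hp hodd hn hpn
  rw [← hZ] at hdm hem hdn hen
  set L := Nat.lcm m n with hL
  have hLpos : 0 < L := Nat.pos_of_ne_zero (Nat.lcm_ne_zero hm.ne' hn.ne')
  have h2L : Nat.lcm (2*m) (2*n) = 2 * L := by rw [Nat.lcm_mul_left]
  have hdL : Z ∣ 2*L := by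
    rw [← h2L]
    exact hdm.trans (Nat.dvd_lcm_left _ _)
  obtain ⟨t, ht⟩ := hdL
  have htpos : 0 < t := by
    rcases Nat.eq_zero_or_pos t with rfl | h
    · omega
    · exact h
  have hlte := lte_fib hp hodd hZpos hZdvd t htpos
  rw [← ht] at hlte
  have h2f : (2*L).factorization p = Z.factorization p + t.factorization p := by
    rw [ht, Nat.factorization_mul hZpos.ne' htpos.ne']
    simp
  have h2Lf : (2*L).factorization p = max ((2*m).factorization p) ((2*n).factorization p) := by
    rw [← h2L, Nat.factorization_lcm (by omega) (by omega)]
    simp [Finsupp.sup_apply]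
  have hlcmf : (Nat.lcm (lucas m) (lucas n)).factorization p
      = max ((lucas m).factorization p) ((lucas n).factorization p) := by
    rw [Nat.factorization_lcm (lucas_pos m).ne' (lucas_pos n).ne']
    simp [Finsupp.sup_apply]
  rw [hlte, hlcmf]
  omega



lemma fib24 : ∀ k, fib (k+24) % 16 = fib k % 16 ∧ fib (k+25) % 16 = fib (k+1) % 16 := by
  intro k
  induction k with
  | zero => decide
  | succ k ih =>
    obtain ⟨h1, h2⟩ := ih
    refine ⟨by rw [show k+1+24 = k+25 from rfl]; exact h2, ?_⟩
    have e1 : fib (k+26) = fib (k+24) + fib (k+25) := Nat.fib_add_two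
    have e2 : fib (k+2) = fib k + fib (k+1) := Nat.fib_add_two
    rw [show k+1+25 = k+26 from rfl, show k+1+1 = k+2 from rfl, e1, e2,
      Nat.add_mod, h1, h2, ← Nat.add_mod]

lemma fib_mod16 (k : ℕ) : fib k % 16 = fib (k % 24) % 16 := by
  induction k using Nat.strong_induction_on with
  | _ k ih =>
    by_cases h : k < 24
    · rw [Nat.mod_eq_of_lt h]
    · have e : k = (k - 24) + 24 := by omega
      rw [e, (fib24 _).1, ih (k-24) (by omega)]
      congr 2
      omega

lemma lucas12 : ∀ k, lucas (k+12) % 8 = lucas k % 8 ∧ lucas (k+13) % 8 = lucas (k+1) % 8 := by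
  intro k
  induction k with
  | zero => decide
  | succ k ih =>
    obtain ⟨h1, h2⟩ := ih
    refine ⟨by rw [show k+1+12 = k+13 from rfl]; exact h2, ?_⟩
    have e1 : lucas (k+14) = lucas (k+13) + lucas (k+12) := rfl
    have e2 : lucas (k+2) = lucas (k+1) + lucas k := rfl
    rw [show k+1+13 = k+14 from rfl, show k+1+1 = k+2 from rfl, e1, e2,
      Nat.add_mod, h1, h2, ← Nat.add_mod]

lemma lucas_mod8 (k : ℕ) : lucas k % 8 = lucas (k % 12) % 8 := by
  induction k using Nat.strong_induction_on with
  | _ k ih =>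
    by_cases h : k < 12
    · rw [Nat.mod_eq_of_lt h]
    · have e : k = (k - 12) + 12 := by omega
      rw [e, (lucas12 _).1, ih (k-12) (by omega)]
      congr 2
      omega

lemma nu_eq2 {p x e : ℕ} (hp : p.Prime) (hx : x ≠ 0) (h1 : p^e ∣ x) (h2 : ¬p^(e+1) ∣ x) :
    x.factorization p = e := by
  have a := (hp.pow_dvd_iff_le_factorization hx).mp h1
  have b : ¬ (e+1 ≤ x.factorization p) := fun hle =>
    h2 ((hp.pow_dvd_iff_le_factorization hx).mpr hle)
  omega

lemma nu2_zero {x : ℕ} (h : x % 2 = 1) : x.factorization 2 = 0 :=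
  Nat.factorization_eq_zero_of_not_dvd (by omega)

lemma nu2_one {x : ℕ} (h : x % 4 = 2) : x.factorization 2 = 1 := by
  apply nu_eq2 Nat.prime_two (by omega)
  · show 2^1 ∣ x; omega
  · show ¬ 2^2 ∣ x; omega

lemma nu2_two {x : ℕ} (h : x % 8 = 4) : x.factorization 2 = 2 := by
  apply nu_eq2 Nat.prime_two (by omega)
  · show 2^2 ∣ x; omega
  · show ¬ 2^3 ∣ x; omega

lemma nu2_three {x : ℕ} (h : x % 16 = 8) : x.factorization 2 = 3 := by
  apply nu_eq2 Nat.prime_two (by omega)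
  · show 2^3 ∣ x; omega
  · show ¬ 2^4 ∣ x; omega

lemma nu2_ge_four {x : ℕ} (hx : x ≠ 0) (h : x % 16 = 0) : 4 ≤ x.factorization 2 := by
  apply (Nat.Prime.pow_dvd_iff_le_factorization Nat.prime_two hx).mp
  show 2^4 ∣ x; omega

-- fib table facts
lemma fib_nu2_not3 {k : ℕ} (h : k % 3 ≠ 0) : (fib k).factorization 2 = 0 := by
  apply nu2_zero
  have h16 := fib_mod16 k
  have hr : k % 24 < 24 := by omega
  have hr3 : (k % 24) % 3 ≠ 0 := by omega
  have htab : ∀ r, r < 24 → r % 3 ≠ 0 → fib r % 16 % 2 = 1 := by decide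
  have := htab _ hr hr3
  omega

lemma fib_nu2_3mod6 {k : ℕ} (h : k % 6 = 3) : (fib k).factorization 2 = 1 := by
  apply nu2_one
  have h16 := fib_mod16 k
  have hr : k % 24 < 24 := by omega
  have hr3 : (k % 24) % 6 = 3 := by omega
  have htab : ∀ r, r < 24 → r % 6 = 3 → fib r % 16 % 4 = 2 := by decide
  have := htab _ hr hr3
  omega

lemma fib_nu2_6mod12 {k : ℕ} (h : k % 12 = 6) : (fib k).factorization 2 = 3 := by
  apply nu2_three
  have h16 := fib_mod16 k
  have hr : k % 24 < 24 := by omega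
  have hr3 : (k % 24) % 12 = 6 := by omega
  have htab : ∀ r, r < 24 → r % 12 = 6 → fib r % 16 = 8 := by decide
  have := htab _ hr hr3
  omega

lemma fib_nu2_0mod12 {k : ℕ} (hk : k ≠ 0) (h : k % 12 = 0) : 4 ≤ (fib k).factorization 2 := by
  apply nu2_ge_four (Nat.fib_pos.mpr (by omega)).ne'
  have h16 := fib_mod16 k
  have hr : k % 24 < 24 := by omega
  have hr3 : (k % 24) % 12 = 0 := by omega
  have htab : ∀ r, r < 24 → r % 12 = 0 → fib r % 16 = 0 := by decide
  have := htab _ hr hr3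
  omega

-- lucas table facts
lemma lucas_nu2_not3 {k : ℕ} (h : k % 3 ≠ 0) : (lucas k).factorization 2 = 0 := by
  apply nu2_zero
  have h8 := lucas_mod8 k
  have hr : k % 12 < 12 := by omega
  have hr3 : (k % 12) % 3 ≠ 0 := by omega
  have htab : ∀ r, r < 12 → r % 3 ≠ 0 → lucas r % 8 % 2 = 1 := by decide
  have := htab _ hr hr3
  omega

lemma lucas_nu2_3mod6 {k : ℕ} (h : k % 6 = 3) : (lucas k).factorization 2 = 2 := by
  apply nu2_two
  have h8 := lucas_mod8 k
  have hr : k % 12 < 12 := by omega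
  have hr3 : (k % 12) % 6 = 3 := by omega
  have htab : ∀ r, r < 12 → r % 6 = 3 → lucas r % 8 = 4 := by decide
  have := htab _ hr hr3
  omega

lemma lucas_nu2_0mod6 {k : ℕ} (h : k % 6 = 0) : (lucas k).factorization 2 = 1 := by
  apply nu2_one
  have h8 := lucas_mod8 k
  have hr : k % 12 < 12 := by omega
  have hr3 : (k % 12) % 6 = 0 := by omega
  have htab : ∀ r, r < 12 → r % 6 = 0 → lucas r % 8 % 4 = 2 := by decide
  have := htab _ hr hr3
  omega

-- evenness of lucas determines 3 ∣ k
lemma lucas_even_iff {k : ℕ} : 2 ∣ lucas k ↔ k % 3 = 0 := by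
  constructor
  · intro h
    by_contra h3
    have := lucas_nu2_not3 (k := k) (by omega)
    have h8 := lucas_mod8 k
    have hr : k % 12 < 12 := by omega
    have hr3 : (k % 12) % 3 ≠ 0 := by omega
    have htab : ∀ r, r < 12 → r % 3 ≠ 0 → lucas r % 8 % 2 = 1 := by decide
    have := htab _ hr hr3
    omega
  · intro h
    have h8 := lucas_mod8 k
    have hr : k % 12 < 12 := by omega
    have hr3 : (k % 12) % 3 = 0 := by omega
    have htab : ∀ r, r < 12 → r % 3 = 0 → lucas r % 8 % 2 = 0 := by decide
    have := htab _ hr hr3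
    omega


lemma gcd_gs_eq (m n : ℕ) (hm : 3 ≤ m) (hn : 3 ≤ n) (s : ℕ)
    (hs : fib (2 * Nat.lcm m n) = Nat.lcm (lucas m) (lucas n) * s) :
    (m % 3 = 0 ∧ n % 3 = 0 → Nat.gcd (Nat.gcd (lucas m) (lucas n)) s = 2) ∧
    (¬(m % 3 = 0 ∧ n % 3 = 0) → Nat.gcd (Nat.gcd (lucas m) (lucas n)) s = 1) := by
  set Lm := lucas m with hLm
  set Ln := lucas n with hLn
  set g := Nat.gcd Lm Ln with hg
  set L := Nat.lcm m n with hL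
  have hLpos : 0 < L := Nat.pos_of_ne_zero (Nat.lcm_ne_zero (by omega) (by omega))
  have hNne : (2*L) ≠ 0 := by omega
  have hfibpos : 0 < fib (2*L) := Nat.fib_pos.mpr (by omega)
  have hlcmLpos : 0 < Nat.lcm Lm Ln :=
    Nat.pos_of_ne_zero (Nat.lcm_ne_zero (lucas_pos m).ne' (lucas_pos n).ne')
  have hspos : 0 < s := by
    rcases Nat.eq_zero_or_pos s with rfl | h
    · rw [mul_zero] at hs; omega
    · exact h
  have hgpos : 0 < g := Nat.gcd_pos_of_pos_left _ (lucas_pos m)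
  -- (α) no odd prime divides both g and s
  have alpha : ∀ p, p.Prime → p ≠ 2 → p ∣ g → ¬ p ∣ s := by
    intro p hp hp2 hpg hps
    have hpm : p ∣ Lm := hpg.trans (Nat.gcd_dvd_left _ _)
    have hpn : p ∣ Ln := hpg.trans (Nat.gcd_dvd_right _ _)
    have hnu : (fib (2*L)).factorization p = (Nat.lcm Lm Ln).factorization p :=
      odd_prime_nu_eq p m n hp hp2 (by omega) (by omega) hpm hpn
    have hmul : (fib (2*L)).factorization p
        = (Nat.lcm Lm Ln).factorization p + s.factorization p := by
      rw [hs, Nat.factorization_mul hlcmLpos.ne' hspos.ne']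
      simp
    have hps' : 1 ≤ s.factorization p :=
      (hp.pow_dvd_iff_le_factorization hspos.ne').mp (by rwa [pow_one])
    omega
  -- ν₂ of gcd
  have hnu2gcd : (Nat.gcd g s).factorization 2
      = min (g.factorization 2) (s.factorization 2) := by
    rw [Nat.factorization_gcd hgpos.ne' hspos.ne']
    simp [Finsupp.inf_apply]
  have hnu2g : g.factorization 2 = min (Lm.factorization 2) (Ln.factorization 2) := by
    rw [hg, Nat.factorization_gcd (lucas_pos m).ne' (lucas_pos n).ne']
    simp [Finsupp.inf_apply, hLm, hLn]
  have hnu2lcm : (Nat.lcm Lm Ln).factorization 2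
      = max (Lm.factorization 2) (Ln.factorization 2) := by
    rw [Nat.factorization_lcm (lucas_pos m).ne' (lucas_pos n).ne']
    simp [Finsupp.sup_apply, hLm, hLn]
  have hnu2s : s.factorization 2 + (Nat.lcm Lm Ln).factorization 2
      = (fib (2*L)).factorization 2 := by
    rw [hs, Nat.factorization_mul hlcmLpos.ne' hspos.ne']
    simp [add_comm]
  constructor
  · rintro ⟨h3m, h3n⟩
    have h3L : 3 ∣ L := dvd_trans ⟨m/3, by omega⟩ (Nat.dvd_lcm_left m n)
    -- ν₂ facts by parity cases
    have hkey : min (g.factorization 2) (s.factorization 2) = 1 := by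
      rcases Nat.even_or_odd m with ⟨m', hm'⟩ | ⟨m', hm'⟩ <;>
        rcases Nat.even_or_odd n with ⟨n', hn'⟩ | ⟨n', hn'⟩
      · -- both even
        have hvm : Lm.factorization 2 = 1 := lucas_nu2_0mod6 (k := m) (by omega)
        have hvn : Ln.factorization 2 = 1 := lucas_nu2_0mod6 (k := n) (by omega)
        have h2L : 2 ∣ L := dvd_trans ⟨n', by omega⟩ (Nat.dvd_lcm_right m n)
        have hfib := fib_nu2_0mod12 hNne (by omega)
        rw [hnu2lcm, hvm, hvn] at hnu2s
        rw [hnu2g, hvm, hvn]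
        omega
      · -- m even, n odd
        have hvm : Lm.factorization 2 = 1 := lucas_nu2_0mod6 (k := m) (by omega)
        have hvn : Ln.factorization 2 = 2 := lucas_nu2_3mod6 (k := n) (by omega)
        have h2L : 2 ∣ L := dvd_trans ⟨m', by omega⟩ (Nat.dvd_lcm_left m n)
        have hfib := fib_nu2_0mod12 hNne (by omega)
        rw [hnu2lcm, hvm, hvn] at hnu2s
        rw [hnu2g, hvm, hvn]
        omega
      · -- m odd, n even
        have hvm : Lm.factorization 2 = 2 := lucas_nu2_3mod6 (k := m) (by omega)
        have hvn : Ln.factorization 2 = 1 := lucas_nu2_0mod6 (k := n) (by omega)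
        have h2L : 2 ∣ L := dvd_trans ⟨n', by omega⟩ (Nat.dvd_lcm_right m n)
        have hfib := fib_nu2_0mod12 hNne (by omega)
        rw [hnu2lcm, hvm, hvn] at hnu2s
        rw [hnu2g, hvm, hvn]
        omega
      · -- both odd
        have hvm : Lm.factorization 2 = 2 := lucas_nu2_3mod6 (k := m) (by omega)
        have hvn : Ln.factorization 2 = 2 := lucas_nu2_3mod6 (k := n) (by omega)
        have hLodd : ¬ 2 ∣ L := by
          intro h2
          have h1 : L ∣ m * n := Nat.lcm_dvd_mul m n
          have h2' : (2:ℕ) ∣ m * n := h2.trans h1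
          rcases (Nat.Prime.dvd_mul Nat.prime_two).mp h2' with h | h <;> omega
        have hfib := fib_nu2_6mod12 (k := 2*L) (by omega)
        rw [hnu2lcm, hvm, hvn] at hnu2s
        rw [hnu2g, hvm, hvn]
        omega
    -- conclude gcd g s = 2
    have hx0 : Nat.gcd g s ≠ 0 := (Nat.gcd_pos_of_pos_left _ hgpos).ne'
    have hxnu : (Nat.gcd g s).factorization 2 = 1 := by rw [hnu2gcd]; exact hkey
    have h2dvd : 2 ∣ Nat.gcd g s := by
      have := (Nat.Prime.pow_dvd_iff_le_factorization Nat.prime_two hx0).mpr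
        (by rw [hxnu] : 1 ≤ (Nat.gcd g s).factorization 2)
      rwa [pow_one] at this
    have hdvd2 : Nat.gcd g s ∣ 2 := by
      rw [← Nat.factorization_le_iff_dvd hx0 (by norm_num)]
      intro p
      rcases eq_or_ne p 2 with rfl | hp2
      · rw [hxnu]
        simp [Nat.Prime.factorization_self Nat.prime_two]
      · by_cases hp : p.Prime
        · by_contra hgt
          push_neg at hgt
          have hppos : 0 < (Nat.gcd g s).factorization p := by omega
          have hpdvd : p ∣ Nat.gcd g s := Nat.dvd_of_factorization_pos hppos.ne'
          exact alpha p hp hp2 (hpdvd.trans (Nat.gcd_dvd_left _ _))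
            (hpdvd.trans (Nat.gcd_dvd_right _ _))
        · rw [Nat.factorization_eq_zero_of_not_prime _ hp]
          omega
    exact Nat.dvd_antisymm hdvd2 h2dvd
  · intro hnot
    by_contra hne
    obtain ⟨p, hp, hpdvd⟩ := Nat.exists_prime_and_dvd hne
    have hpg : p ∣ g := hpdvd.trans (Nat.gcd_dvd_left _ _)
    have hps : p ∣ s := hpdvd.trans (Nat.gcd_dvd_right _ _)
    rcases eq_or_ne p 2 with rfl | hp2
    · have h2m : 2 ∣ Lm := hpg.trans (Nat.gcd_dvd_left _ _)
      have h2n : 2 ∣ Ln := hpg.trans (Nat.gcd_dvd_right _ _)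
      rw [hLm, lucas_even_iff] at h2m
      rw [hLn, lucas_even_iff] at h2n
      exact hnot ⟨h2m, h2n⟩
    · exact alpha p hp hp2 hpg hps



theorem z_lucas_mul_lucas (m n : ℕ) (hm : 3 ≤ m) (hn : 3 ≤ n) :
    (m % 3 = 0 ∧ n % 3 = 0 →
      z (lucas m * lucas n) = Nat.lcm m n * Nat.gcd (lucas m) (lucas n)) ∧
    (¬ (m % 3 = 0 ∧ n % 3 = 0) →
      z (lucas m * lucas n) = 2 * Nat.lcm m n * Nat.gcd (lucas m) (lucas n)) := by
  set L := Nat.lcm m n with hL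
  have hLpos : 0 < L := Nat.pos_of_ne_zero (Nat.lcm_ne_zero (by omega) (by omega))
  set N := 2 * L with hN
  have hmdvd : 2*m ∣ N := by
    rw [hN, hL]
    exact Nat.mul_dvd_mul_left 2 (Nat.dvd_lcm_left m n)
  have hndvd : 2*n ∣ N := by
    rw [hN, hL]
    exact Nat.mul_dvd_mul_left 2 (Nat.dvd_lcm_right m n)
  have hLmfib : lucas m ∣ fib N := (lucas_dvd_fib_iff m N hm).mpr hmdvd
  have hLnfib : lucas n ∣ fib N := (lucas_dvd_fib_iff n N hn).mpr hndvd
  have hlcmdvd : Nat.lcm (lucas m) (lucas n) ∣ fib N := Nat.lcm_dvd hLmfib hLnfib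
  obtain ⟨s, hs⟩ := hlcmdvd
  have hz : z (lucas m * lucas n)
      = N * ((lucas m * lucas n) / Nat.gcd (lucas m * lucas n) (fib N)) := by
    apply z_prod
    · omega
    · exact Nat.mul_pos (lucas_pos m) (lucas_pos n)
    · exact mul_dvd_mul hLmfib hLnfib
    · intro k hk
      have h1 : lucas m ∣ fib k := (dvd_mul_right _ _).trans hk
      have h2 : lucas n ∣ fib k := (dvd_mul_left _ _).trans hk
      rw [lucas_dvd_fib_iff m k hm] at h1
      rw [lucas_dvd_fib_iff n k hn] at h2
      have : Nat.lcm (2*m) (2*n) ∣ k := Nat.lcm_dvd h1 h2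
      rwa [Nat.lcm_mul_left] at this
  set g := Nat.gcd (lucas m) (lucas n) with hgdef
  have hkeygcd : Nat.gcd (lucas m * lucas n) (fib N)
      = Nat.lcm (lucas m) (lucas n) * Nat.gcd g s := by
    have h1 : lucas m * lucas n = Nat.lcm (lucas m) (lucas n) * g := by
      rw [hgdef, mul_comm (Nat.lcm (lucas m) (lucas n)) _, Nat.gcd_mul_lcm]
    rw [h1, hs, Nat.gcd_mul_left]
  have hlcmLpos : 0 < Nat.lcm (lucas m) (lucas n) :=
    Nat.pos_of_ne_zero (Nat.lcm_ne_zero (lucas_pos m).ne' (lucas_pos n).ne')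
  have hquot : ∀ e : ℕ, Nat.gcd g s = e →
      (lucas m * lucas n) / Nat.gcd (lucas m * lucas n) (fib N) = g / e := by
    intro e he
    rw [hkeygcd, he]
    have h1 : lucas m * lucas n = Nat.lcm (lucas m) (lucas n) * g := by
      rw [hgdef, mul_comm (Nat.lcm (lucas m) (lucas n)) _, Nat.gcd_mul_lcm]
    rw [h1, Nat.mul_div_mul_left _ _ hlcmLpos]
  obtain ⟨hcase1, hcase2⟩ := gcd_gs_eq m n hm hn s hs
  constructor
  · intro hboth
    have he := hcase1 hboth
    rw [hz, hquot 2 he]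
    have h2g : 2 ∣ g := by
      rw [hgdef]
      apply Nat.dvd_gcd
      · exact lucas_even_iff.mpr hboth.1
      · exact lucas_even_iff.mpr hboth.2
    obtain ⟨g', hg'⟩ := h2g
    rw [hg', Nat.mul_div_cancel_left _ (by norm_num : 0 < 2), hN]
    ring
  · intro hnot
    have he := hcase2 hnot
    rw [hz, hquot 1 he, Nat.div_one, hN]
end
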